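/- Let G = ⟨a, b ∣ a² = b², a⁴ = b⁴ = (ab)³ = 1⟩. Then G has order 12, ab has order 3, and a has order 4; in particular the order of ab (namely 3) is not equal to half the order of G. -/

import Mathlib

/-!
With `r = a⁻¹b`, the relations give `r³ = a²`, hence `r⁶ = 1`, and `a r a⁻¹ = b a⁻¹ = r⁻¹`
(using `a² = b²`). These are the defining relations of the dicyclic group
`QuaternionGroup 3 = ⟨x, r⟩` of order 12, so `a ↦ x`, `b ↦ x r` is an isomorphism onto it,
with inverse `x ↦ a`, `r ↦ a⁻¹b`. There the image `x · x r = x² r = r⁴` of `ab` has order 3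
and `x` has order 4.
-/

/-- The defining relations of `G = ⟨a, b ∣ a² = b², a⁴ = b⁴ = (ab)³ = 1⟩`,
as elements of the free group on two generators `a = of 0`, `b = of 1`. -/
def bdRels : Set (FreeGroup (Fin 2)) :=
  {FreeGroup.of 0 ^ 2 * (FreeGroup.of 1 ^ 2)⁻¹,
   FreeGroup.of 0 ^ 4, FreeGroup.of 1 ^ 4,
   (FreeGroup.of 0 * FreeGroup.of 1) ^ 3}

section ZModPow

variable {H : Type*} [Group H] {m : ℕ}

def zmodPowHom (r : H) (hr : r ^ m = 1) : Multiplicative (ZMod m) →* H :=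
  AddMonoidHom.toMultiplicativeLeft <| ZMod.lift m
    ⟨zmultiplesHom (Additive H) (.ofMul r), by
      simpa [← ofMul_zpow] using congrArg Additive.ofMul hr⟩

theorem zmodPowHom_ofAdd_intCast (r : H) (hr : r ^ m = 1) (k : ℤ) :
    zmodPowHom r hr (.ofAdd (k : ZMod m)) = r ^ k := by
  simp [zmodPowHom]

theorem zmodPowHom_ofAdd_natCast (r : H) (hr : r ^ m = 1) (k : ℕ) :
    zmodPowHom r hr (.ofAdd (k : ZMod m)) = r ^ k := by
  exact_mod_cast zmodPowHom_ofAdd_intCast r hr k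

@[simp]
theorem zmodPowHom_ofAdd_one (r : H) (hr : r ^ m = 1) : zmodPowHom r hr (.ofAdd 1) = r := by
  simpa using zmodPowHom_ofAdd_intCast r hr 1

theorem zmodPowHom_ofAdd_mul {x r : H} (hr : r ^ m = 1) (hxr : x * r * x⁻¹ = r⁻¹)
    (i : ZMod m) : zmodPowHom r hr (.ofAdd i) * x = x * zmodPowHom r hr (.ofAdd (-i)) := by
  obtain ⟨k, rfl⟩ := ZMod.intCast_surjective i
  rw [← Int.cast_neg, zmodPowHom_ofAdd_intCast, zmodPowHom_ofAdd_intCast, eq_comm,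
    ← mul_inv_eq_iff_eq_mul, ← conj_zpow, hxr, inv_zpow, zpow_neg, inv_inv]

end ZModPow

namespace QuaternionGroup

variable {n : ℕ} {H : Type*} [Group H]

theorem a_one_zpow (k : ℤ) : (a 1 : QuaternionGroup n) ^ k = a k := by
  cases k with
  | ofNat k => simp [a_one_pow]
  | negSucc k =>
    rw [zpow_negSucc, a_one_pow, Int.cast_negSucc, inv_eq_of_mul_eq_one_right]
    rw [a_mul_a, add_neg_cancel, a_zero]

theorem hom_ext {φ ψ : QuaternionGroup n →* H} (h_a : φ (a 1) = ψ (a 1))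
    (h_xa : φ (xa 0) = ψ (xa 0)) : φ = ψ := by
  have h_a' (i : ZMod (2 * n)) : φ (a i) = ψ (a i) := by
    obtain ⟨k, rfl⟩ := ZMod.intCast_surjective i
    rw [← a_one_zpow, map_zpow, map_zpow, h_a]
  ext (i | i)
  · exact h_a' i
  · rw [← zero_add i, ← xa_mul_a, map_mul, map_mul, h_xa, h_a']

def lift (x r : H) (hr : r ^ (2 * n) = 1) (hxr : x * r * x⁻¹ = r⁻¹) (hx : x ^ 2 = r ^ n) :
    QuaternionGroup n →* H where
  toFun
    | a i => zmodPowHom r hr (.ofAdd i)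
    | xa i => x * zmodPowHom r hr (.ofAdd i)
  map_one' := map_one _
  map_mul' := by
    have hconj := zmodPowHom_ofAdd_mul hr hxr
    rintro (i | i) (j | j) <;> simp only [a_mul_a, a_mul_xa, xa_mul_a, xa_mul_xa]
    · rw [ofAdd_add, map_mul]
    · rw [← mul_assoc, hconj, mul_assoc, ← map_mul, ← ofAdd_add, neg_add_eq_sub]
    · rw [ofAdd_add, map_mul, mul_assoc]
    · rw [mul_assoc, ← mul_assoc _ x, hconj, ← mul_assoc, ← mul_assoc, ← sq, hx,
        ← zmodPowHom_ofAdd_natCast r hr, mul_assoc, ← map_mul, ← map_mul, ← ofAdd_add,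
        ← ofAdd_add, neg_add_eq_sub, add_sub_assoc]

@[simp]
theorem lift_a (x r : H) (hr : r ^ (2 * n) = 1) (hxr : x * r * x⁻¹ = r⁻¹) (hx : x ^ 2 = r ^ n)
    (i : ZMod (2 * n)) : lift x r hr hxr hx (a i) = zmodPowHom r hr (.ofAdd i) := rfl

@[simp]
theorem lift_xa (x r : H) (hr : r ^ (2 * n) = 1) (hxr : x * r * x⁻¹ = r⁻¹) (hx : x ^ 2 = r ^ n)
    (i : ZMod (2 * n)) : lift x r hr hxr hx (xa i) = x * zmodPowHom r hr (.ofAdd i) := rfl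

end QuaternionGroup

namespace bdRels

open QuaternionGroup

local notation "α" => (PresentedGroup.of 0 : PresentedGroup bdRels)
local notation "β" => (PresentedGroup.of 1 : PresentedGroup bdRels)
local notation "ρ" => α⁻¹ * β

theorem of_zero_sq : α ^ 2 = β ^ 2 :=
  (map_pow _ _ _).symm.trans <| (PresentedGroup.mk_eq_mk_of_mul_inv_mem (by simp [bdRels])).trans
    (map_pow _ _ _)

theorem of_zero_pow_four : α ^ 4 = 1 :=
  (map_pow _ _ _).symm.trans (PresentedGroup.one_of_mem (by simp [bdRels]))

theorem of_zero_mul_of_one_pow_three : (α * β) ^ 3 = 1 := by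
  have := PresentedGroup.one_of_mem (rels := bdRels) (x := (FreeGroup.of 0 * FreeGroup.of 1) ^ 3)
    (by simp [bdRels])
  rwa [map_pow, map_mul] at this

theorem inv_of_zero_mul_of_one_pow_three : ρ ^ 3 = α ^ 2 := by
  have hcomm : Commute (α ^ 2) ρ :=
    ((Commute.pow_self α 2).inv_right).mul_right (of_zero_sq ▸ Commute.pow_self β 2)
  have h : α ^ 2 * ρ ^ 3 = 1 := by
    calc α ^ 2 * ρ ^ 3 = (α ^ 4)⁻¹ * (α ^ 2 * ρ) ^ 3 := by rw [hcomm.mul_pow]; group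
      _ = (α * β) ^ 3 := by rw [of_zero_pow_four]; group
      _ = 1 := of_zero_mul_of_one_pow_three
  rw [eq_inv_of_mul_eq_one_right h, inv_eq_iff_mul_eq_one, ← pow_add, of_zero_pow_four]

theorem inv_of_zero_mul_of_one_pow_six : ρ ^ (2 * 3) = 1 := by
  rw [pow_mul', inv_of_zero_mul_of_one_pow_three, ← pow_mul, of_zero_pow_four]

theorem conj_inv_of_zero_mul_of_one : α * ρ * α⁻¹ = ρ⁻¹ := by
  calc α * ρ * α⁻¹ = β⁻¹ * β ^ 2 * α⁻¹ := by group
    _ = ρ⁻¹ := by rw [← of_zero_sq]; group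

def toQuaternion : PresentedGroup bdRels →* QuaternionGroup 3 :=
  PresentedGroup.toGroup (f := ![xa 0, xa 1]) <| by
    simp only [bdRels, Set.mem_insert_iff, Set.mem_singleton_iff]
    rintro _ (rfl | rfl | rfl | rfl) <;> decide

def ofQuaternion : QuaternionGroup 3 →* PresentedGroup bdRels :=
  lift α ρ inv_of_zero_mul_of_one_pow_six conj_inv_of_zero_mul_of_one
    inv_of_zero_mul_of_one_pow_three.symm

def mulEquivQuaternion : PresentedGroup bdRels ≃* QuaternionGroup 3 :=
  toQuaternion.toMulEquiv ofQuaternion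
    (PresentedGroup.ext fun i => by fin_cases i <;> simp [toQuaternion, ofQuaternion])
    (hom_ext (by simp [toQuaternion, ofQuaternion]; decide) (by simp [toQuaternion, ofQuaternion]))

theorem mulEquivQuaternion_of_zero : mulEquivQuaternion α = xa 0 := by
  simp [mulEquivQuaternion, toQuaternion]

theorem mulEquivQuaternion_of_one : mulEquivQuaternion β = xa 1 := by
  simp [mulEquivQuaternion, toQuaternion]

theorem card_eq : Nat.card (PresentedGroup bdRels) = 12 := by
  rw [Nat.card_congr mulEquivQuaternion.toEquiv, Nat.card_eq_fintype_card, QuaternionGroup.card]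

theorem orderOf_of_zero_mul_of_one : orderOf (α * β) = 3 := by
  rw [← mulEquivQuaternion.orderOf_eq, map_mul, mulEquivQuaternion_of_zero,
    mulEquivQuaternion_of_one, xa_mul_xa, orderOf_a]
  decide

theorem orderOf_of_zero : orderOf α = 4 := by
  rw [← mulEquivQuaternion.orderOf_eq, mulEquivQuaternion_of_zero, orderOf_xa]

end bdRels

/-- The group `G = ⟨a, b ∣ a² = b², a⁴ = b⁴ = (ab)³ = 1⟩` has order 12, `ab` has
order 3, `a` has order 4, and in particular the order of `ab` is not half the
order of `G`. -/
theorem stmt_17 :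
    Nat.card (PresentedGroup bdRels) = 12 ∧
    orderOf ((PresentedGroup.of 0 : PresentedGroup bdRels) * PresentedGroup.of 1) = 3 ∧
    orderOf (PresentedGroup.of 0 : PresentedGroup bdRels) = 4 ∧
    orderOf ((PresentedGroup.of 0 : PresentedGroup bdRels) * PresentedGroup.of 1) ≠
      Nat.card (PresentedGroup bdRels) / 2 := by
  refine ⟨bdRels.card_eq, bdRels.orderOf_of_zero_mul_of_one, bdRels.orderOf_of_zero, ?_⟩
  rw [bdRels.orderOf_of_zero_mul_of_one, bdRels.card_eq]
  decide
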